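/- arXiv:2004.08676 — 3 statements merged into one kernel-verified Lean document; each statement's English description precedes it below -/
import Mathlib

section
/- Let M be a finitely generated, cancellative, sharp commutative monoid (i.e. its only unit is 0) whose groupification is torsion-free. Then there exists a monoid homomorphism φ : M → ℕ such that φ(x) = 0 implies x = 0. -/
/-!
Via its groupification `ℤⁿ`, the monoid `M` embeds into the `ℚ`-vector space `ℚⁿ`. Sharpness
says that no nontrivial nonnegative rational combination of the nonzero generators vanishes, so by
Gordan's alternative some linear form is positive on all of them; clearing denominators turns it
into a homomorphism `M → ℕ` that is positive on the generators, hence on every nonzero element.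
Gordan's alternative is proved by induction on the number of vectors, passing to the quotient by
the line spanned by the last one.
-/

open Function

lemma Finset.exists_mul_add_pos {K ι : Type*} [Field K] [LinearOrder K] [IsStrictOrderedRing K]
    (s : Finset ι) {x : ι → K} (y : ι → K)
    (hx : ∀ i ∈ s, 0 < x i) : ∃ t : K, ∀ i ∈ s, 0 < t * x i + y i := by
  obtain ⟨m, hm⟩ := (s.image fun i => -y i / x i).exists_le
  refine ⟨m + 1, fun i hi => ?_⟩
  have hmi := hm _ (Finset.mem_image_of_mem _ hi)
  rw [div_le_iff₀ (hx i hi)] at hmi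
  nlinarith [hx i hi]

section NonnegIndepOn

variable {K V ι : Type*}

section Semiring

variable [Semiring K] [PartialOrder K] [AddCommMonoid V] [Module K V]

variable (K) in
def NonnegIndepOn (v : ι → V) (s : Finset ι) : Prop :=
  ∀ c : ι → K, (∀ i ∈ s, 0 ≤ c i) → ∑ i ∈ s, c i • v i = 0 → ∀ i ∈ s, c i = 0

variable {v : ι → V} {s t : Finset ι}

lemma NonnegIndepOn.mono (h : NonnegIndepOn K v t) (hst : s ⊆ t) : NonnegIndepOn K v s := by
  classical
  intro c hc hsum i hi
  have hc' := h (fun i => if i ∈ s then c i else 0) (fun i _ => by split_ifs <;> simp [*])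
    (by
      simp only [ite_smul, zero_smul]
      rw [Finset.sum_ite_mem, Finset.inter_eq_right.mpr hst, hsum])
    i (hst hi)
  simpa [hi] using hc'

lemma NonnegIndepOn.ne_zero [IsOrderedRing K] [Nontrivial K] (h : NonnegIndepOn K v s) {a : ι}
    (ha : a ∈ s) : v a ≠ 0 := by
  classical
  intro hva
  have := h (fun i => if i = a then 1 else 0) (fun i _ => by split_ifs <;> norm_num)
    (by simp [ite_smul, hva]) a ha
  simp at this

end Semiring

variable [AddCommGroup V] {v : ι → V} {s : Finset ι}

/-- A relation of the quotient family lifts to `∑ c i • v i = r • v a`: for `r ≤ 0` this is a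
nonnegative relation of the whole family, and for `r > 0` applying `f` forces `c = 0`. -/
lemma NonnegIndepOn.mkQ_span_singleton [CommRing K] [LinearOrder K] [IsStrictOrderedRing K]
    [Module K V] [DecidableEq ι] {a : ι} (h : NonnegIndepOn K v (insert a s)) (ha : a ∉ s)
    {f : V →ₗ[K] K} (hf : ∀ i ∈ s, 0 < f (v i)) (hfa : f (v a) ≤ 0) :
    NonnegIndepOn K ((K ∙ v a).mkQ ∘ v) s := by
  intro c hc hsum
  obtain ⟨r, hr⟩ : ∃ r : K, r • v a = ∑ i ∈ s, c i • v i := by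
    rw [← Submodule.mem_span_singleton, ← Submodule.Quotient.mk_eq_zero, ← Submodule.mkQ_apply]
    simpa only [map_sum, map_smul, comp_apply] using hsum
  rcases le_or_gt r 0 with hr0 | hr0
  · intro i hi
    have hne : ∀ j ∈ s, j ≠ a := fun j hj hja => ha (hja ▸ hj)
    have hupd := h (update c a (-r))
      (by
        rw [Finset.forall_mem_insert, update_self]
        exact ⟨neg_nonneg.mpr hr0, fun j hj => by rw [update_of_ne (hne j hj)]; exact hc j hj⟩)
      (by
        rw [Finset.sum_insert ha, update_self, Finset.sum_congr rfl fun j hj => by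
          rw [update_of_ne (hne j hj)], ← hr, neg_smul, neg_add_cancel])
      i (Finset.mem_insert_of_mem hi)
    rwa [update_of_ne (hne i hi)] at hupd
  · have hsum_f : ∑ i ∈ s, c i * f (v i) = r * f (v a) := by
      simpa [map_sum] using congrArg f hr.symm
    have hnonneg : ∀ i ∈ s, 0 ≤ c i * f (v i) := fun i hi => mul_nonneg (hc i hi) (hf i hi).le
    have hterm := (Finset.sum_eq_zero_iff_of_nonneg hnonneg).mp
      (le_antisymm (hsum_f ▸ mul_nonpos_of_nonneg_of_nonpos hr0.le hfa)
        (Finset.sum_nonneg hnonneg))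
    intro i hi
    exact (mul_eq_zero.mp (hterm i hi)).resolve_right (hf i hi).ne'

/-- Gordan's alternative. -/
theorem NonnegIndepOn.exists_linearMap_pos [Field K] [LinearOrder K] [IsStrictOrderedRing K]
    [Module K V] (h : NonnegIndepOn K v s) :
    ∃ f : V →ₗ[K] K, ∀ i ∈ s, 0 < f (v i) := by
  classical
  induction s using Finset.induction_on generalizing V with
  | empty => exact ⟨0, by simp⟩
  | insert a s ha ih =>
    obtain ⟨f, hf⟩ := ih (h.mono (Finset.subset_insert a s))
    by_cases hfa : 0 < f (v a)
    · exact ⟨f, Finset.forall_mem_insert .. |>.mpr ⟨hfa, hf⟩⟩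
    obtain ⟨g, hg⟩ := ih (h.mkQ_span_singleton ha hf (not_lt.mp hfa))
    obtain ⟨e, he⟩ :=
      Module.Projective.exists_dual_eq_one K (h.ne_zero (Finset.mem_insert_self a s))
    obtain ⟨t, ht⟩ := s.exists_mul_add_pos (fun i => e (v i)) hg
    refine ⟨t • (g ∘ₗ (K ∙ v a).mkQ) + e, Finset.forall_mem_insert .. |>.mpr ⟨?_, fun i hi => ?_⟩⟩
    · have hva : (K ∙ v a).mkQ (v a) = 0 :=
        (Submodule.Quotient.mk_eq_zero _).mpr (Submodule.mem_span_singleton_self _)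
      simp [he, hva]
    · simpa using ht i hi

lemma Finset.exists_nat_mul_eq_natCast (s : Finset ι) {q : ι → ℚ}
    (hq : ∀ i ∈ s, 0 ≤ q i) : ∃ N : ℕ, N ≠ 0 ∧ ∀ i ∈ s, ∃ k : ℕ, (N : ℚ) * q i = k := by
  refine ⟨∏ i ∈ s, (q i).den, Finset.prod_ne_zero_iff.mpr fun i _ => (q i).den_ne_zero,
    fun i hi => ?_⟩
  obtain ⟨r, hr⟩ := Finset.dvd_prod_of_mem (fun i => (q i).den) hi
  refine ⟨r * (q i).num.toNat, ?_⟩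
  have hnum : (((q i).num.toNat : ℕ) : ℚ) = (q i).num := by
    exact_mod_cast Int.toNat_of_nonneg (Rat.num_nonneg.mpr (hq i hi))
  rw [hr, Nat.cast_mul, Nat.cast_mul, hnum, mul_right_comm, Rat.den_mul_eq_num, mul_comm]

lemma nonnegIndepOn_rat_of_nat [Module ℚ V]
    (h : ∀ m : ι → ℕ, ∑ i ∈ s, m i • v i = 0 → ∀ i ∈ s, m i = 0) : NonnegIndepOn ℚ v s := by
  intro c hc hsum
  obtain ⟨N, hN, hk⟩ := s.exists_nat_mul_eq_natCast hc
  choose! k hk using hk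
  have hk0 := h k <| calc
    ∑ i ∈ s, k i • v i = ∑ i ∈ s, ((N : ℚ) * c i) • v i :=
      Finset.sum_congr rfl fun i hi => by rw [hk i hi, Nat.cast_smul_eq_nsmul]
    _ = (N : ℚ) • ∑ i ∈ s, c i • v i := by simp only [Finset.smul_sum, mul_smul]
    _ = 0 := by rw [hsum, smul_zero]
  intro i hi
  have hNc := hk i hi
  rw [hk0 i hi, Nat.cast_zero, mul_eq_zero] at hNc
  exact hNc.resolve_left (Nat.cast_ne_zero.mpr hN)

end NonnegIndepOn

lemma nonnegIndepOn_rat_of_addUnits_subsingleton {M V : Type*} [AddCommMonoid M]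
    [Subsingleton (AddUnits M)] [AddCommGroup V] [Module ℚ V] (ι : M →+ V)
    (hι : ∀ x, ι x = 0 → x = 0) {S : Finset M} (hS : 0 ∉ S) : NonnegIndepOn ℚ ι S := by
  refine nonnegIndepOn_rat_of_nat fun m hm x hx => ?_
  simp_rw [← map_nsmul, ← map_sum] at hm
  have hmx : m x • x = 0 := Finset.sum_eq_zero_iff.mp (hι _ hm) x hx
  by_contra hm0
  exact hS <| ((isAddUnit_nsmul_iff hm0).mp (hmx ▸ isAddUnit_zero)).eq_zero ▸ hx

lemma AddSubmonoid.eq_zero_of_map_eq_zero_of_closure_eq_top {M R : Type*} [AddMonoid M]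
    [AddCommMonoid R] [PartialOrder R] [IsOrderedCancelAddMonoid R] {S : Set M}
    (hS : AddSubmonoid.closure S = ⊤) (ψ : M →+ R) (hψ : ∀ x ∈ S, 0 < ψ x) (x : M)
    (hx : ψ x = 0) : x = 0 := by
  have key : ∀ y ∈ AddSubmonoid.closure S, y = 0 ∨ 0 < ψ y := by
    intro y hy
    induction hy using AddSubmonoid.closure_induction with
    | mem y hy => exact .inr (hψ y hy)
    | zero => exact .inl rfl
    | add y z _ _ hy hz =>
      rcases hy with rfl | hy
      · simpa using hz
      · rcases hz with rfl | hz
        · exact .inr (by simpa using hy)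
        · exact .inr (by rw [map_add]; exact add_pos hy hz)
  exact (key x (hS ▸ AddSubmonoid.mem_top x)).resolve_right hx.not_gt

lemma AddSubmonoid.exists_addMonoidHom_nat_of_closure_eq_top {M : Type*} [AddMonoid M]
    {S : Finset M} (hS : AddSubmonoid.closure (S : Set M) = ⊤) (ψ : M →+ ℚ)
    (hψ : ∀ x ∈ S, 0 ≤ ψ x) : ∃ φ : M →+ ℕ, ∃ N : ℕ, N ≠ 0 ∧ ∀ x, (φ x : ℚ) = N * ψ x := by
  obtain ⟨N, hN, hS'⟩ := S.exists_nat_mul_eq_natCast hψ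
  have hnat : AddSubmonoid.closure (S : Set M) ≤
      (AddMonoidHom.mrange (Nat.castAddMonoidHom ℚ)).comap ((N : ℚ) • ψ) :=
    AddSubmonoid.closure_le.mpr fun x hx => (hS' x hx).imp fun k hk => by simp [hk]
  choose φ hφ using fun x => AddMonoidHom.mem_mrange.mp (hnat (hS ▸ AddSubmonoid.mem_top x))
  simp only [Nat.coe_castAddMonoidHom, AddMonoidHom.smul_apply, smul_eq_mul] at hφ
  refine ⟨{ toFun := φ, map_zero' := ?_, map_add' := fun x y => ?_ }, N, hN, hφ⟩
  · exact Nat.cast_injective (R := ℚ) (by rw [hφ, map_zero, mul_zero, Nat.cast_zero])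
  · exact Nat.cast_injective (R := ℚ) (by rw [Nat.cast_add, hφ, hφ, hφ, map_add, mul_add])

lemma AffineAddMonoid.exists_injective_addMonoidHom_rat (M : Type*) [AddCancelCommMonoid M]
    [AddMonoid.FG M] [IsAddTorsionFree M] : ∃ ι : M →+ (Fin (dim M) →₀ ℚ), Injective ι :=
  ⟨(Finsupp.mapRange.addMonoidHom (Int.castAddHom ℚ)).comp
      ((FreeAbelianGroup.equivFinsupp _).toAddMonoidHom.comp (embedding M)),
    (Finsupp.mapRange_injective _ Int.cast_zero Int.cast_injective).comp
      ((FreeAbelianGroup.equivFinsupp _).injective.comp embedding_injective)⟩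

/-- Let `M` be a finitely generated, cancellative, sharp commutative monoid (its only unit
is `0`) whose groupification is torsion-free (for a cancellative monoid this means
`k • x = k • y → x = y` for `k > 0`).  Then there is a monoid homomorphism `φ : M → ℕ`
with trivial kernel: `φ x = 0 → x = 0`. -/
theorem sharp_fg_monoid_exists_hom_to_nat (M : Type) [AddCancelCommMonoid M]
    [AddMonoid.FG M]
    (hsharp : ∀ a b : M, a + b = 0 → a = 0 ∧ b = 0)
    (htorsionfree : ∀ (k : ℕ) (x y : M), 0 < k → k • x = k • y → x = y) :
    ∃ φ : M →+ ℕ, ∀ x : M, φ x = 0 → x = 0 := by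
  classical
  have : Subsingleton (AddUnits M) := Subsingleton.addUnits_of_isAddUnit fun a ha =>
    (hsharp a _ ha.exists_neg.choose_spec).1
  have : IsAddTorsionFree M := ⟨fun k hk x y => htorsionfree k x y (Nat.pos_of_ne_zero hk)⟩
  obtain ⟨ι, hι⟩ := AffineAddMonoid.exists_injective_addMonoidHom_rat M
  obtain ⟨S, hS⟩ := AddMonoid.FG.fg_top (M := M)
  have hS0 : AddSubmonoid.closure ((S.erase 0 : Finset M) : Set M) = ⊤ := by
    rw [Finset.coe_erase, AddSubmonoid.closure_sdiff_singleton_zero, hS]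
  obtain ⟨f, hf⟩ := (nonnegIndepOn_rat_of_addUnits_subsingleton ι
    (fun x hx => hι (hx.trans (map_zero ι).symm)) (S.notMem_erase 0)).exists_linearMap_pos
  obtain ⟨φ, N, hN, hφ⟩ := AddSubmonoid.exists_addMonoidHom_nat_of_closure_eq_top hS0
    (f.toAddMonoidHom.comp ι) fun x hx => (hf x hx).le
  refine ⟨φ, AddSubmonoid.eq_zero_of_map_eq_zero_of_closure_eq_top hS0 φ fun x hx => ?_⟩
  have hφx : (0 : ℚ) < φ x := by
    rw [hφ]; exact mul_pos (Nat.cast_pos.mpr (Nat.pos_of_ne_zero hN)) (hf x hx)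
  exact_mod_cast hφx
end

section
/- Let Γ be a finite connected multigraph with vertex set V, half-edge set H (each edge e consisting of two half-edges h, h' at vertices u, v), and let I : H → ℤ be a function with I(h) + I(h') = 0 for every edge. Assume Γ has no strict cycle with respect to I, i.e. no closed directed path of edges (h_1,h_1'),…,(h_k,h_k') with all I(h_i) ≥ 0 and at least one I(h_i) > 0. Then there exist a function d : V → ℤ and an assignment of positive integers ℓ(e) to each edge e such that for every edge e = (h,h') with h at u and h' at v, one has d(u) + I(h)·ℓ(e) = d(v). -/
/-!
Orient every edge with nonnegative twist from `h` to `ι h`, and give each vertex `v` the level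
`d₀ v`, the number of vertices from which `v` can be reached along such edges. A neutral edge
can be traversed both ways, so `d₀` is constant along it; a positive edge `h` strictly raises
`d₀`, since a way back from its head to its tail would close a strict cycle. Scaling `d₀` by a
common multiple `N` of the nonzero twists makes every level difference `N (d₀ v - d₀ u)`
divisible by the twist of the edge, and the quotients are the positive lengths.
-/

open Relation

namespace Relation

variable {α : Type*} {r : α → α → Prop} {a b : α}

theorem TransGen.exists_chain (hab : TransGen r a b) :
    ∃ k > 0, ∃ c : ℕ → α, c 0 = a ∧ c k = b ∧ ∀ i < k, r (c i) (c (i + 1)) := by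
  induction hab with
  | @single b hab =>
    refine ⟨1, one_pos, fun i => if i = 0 then a else b, rfl, rfl, fun i hi => ?_⟩
    obtain rfl : i = 0 := by omega
    simpa using hab
  | @tail b d _ hbd ih =>
    obtain ⟨k, hk, c, hc0, hck, hc⟩ := ih
    refine ⟨k + 1, k.succ_pos, fun i => if i ≤ k then c i else d, by simp [hc0], by simp,
      fun i hi => ?_⟩
    rcases Nat.lt_or_ge i k with hik | hik
    · simpa [hik.le, Nat.succ_le_of_lt hik] using hc i hik
    · obtain rfl : i = k := by omega
      simpa [hck] using hbd

theorem TransGen.exists_periodic_chain (haa : TransGen r a a) :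
    ∃ k > 0, ∃ c : ℕ → α, c 0 = a ∧ Function.Periodic c k ∧ ∀ i, r (c i) (c (i + 1)) := by
  obtain ⟨k, hk, c, hc0, hck, hc⟩ := haa.exists_chain
  have hwrap : ∀ j ≤ k, c (j % k) = c j := by
    intro j hj
    rcases hj.lt_or_eq with hj | rfl
    · rw [Nat.mod_eq_of_lt hj]
    · rw [Nat.mod_self, hc0, hck]
  refine ⟨k, hk, fun i => c (i % k), by simp [hc0], fun i => by simp, fun i => ?_⟩
  have hi : i % k < k := Nat.mod_lt i hk
  show r (c (i % k)) (c ((i + 1) % k))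
  rw [← Nat.mod_add_mod, hwrap _ hi]
  exact hc _ hi

end Relation

section Ancestors

variable {α : Type*} (r : α → α → Prop)

noncomputable def numAncestors (a : α) : ℕ := {x | ReflTransGen r x a}.ncard

variable {r} [Finite α] {a b : α}

theorem numAncestors_le_of_reflTransGen (hab : ReflTransGen r a b) :
    numAncestors r a ≤ numAncestors r b :=
  Set.ncard_le_ncard (fun _ hx => ReflTransGen.trans hx hab) (Set.toFinite _)

theorem numAncestors_lt_of_reflTransGen (hab : ReflTransGen r a b)
    (hba : ¬ReflTransGen r b a) : numAncestors r a < numAncestors r b :=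
  Set.ncard_lt_ncard
    (Set.ssubset_iff_of_subset (fun _ hx => ReflTransGen.trans hx hab) |>.mpr
      ⟨b, ReflTransGen.refl, hba⟩)
    (Set.toFinite _)

end Ancestors

theorem exists_pos_forall_dvd {β : Type*} [Fintype β] (f : β → ℤ) :
    ∃ N > 0, ∀ i, f i ≠ 0 → f i ∣ N := by
  classical
  refine ⟨∏ i ∈ Finset.univ.filter (f · ≠ 0), |f i|,
    Finset.prod_pos fun i hi => abs_pos.mpr (Finset.mem_filter.mp hi).2, fun i hi => ?_⟩
  exact (self_dvd_abs _).trans (Finset.dvd_prod_of_mem _ (by simpa using hi))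

section Twist

variable {V H : Type*} (vertexOf : H → V) (ι : H → H) (I : H → ℤ)

def nonnegTwistAdj (u v : V) : Prop := ∃ h, vertexOf h = u ∧ vertexOf (ι h) = v ∧ 0 ≤ I h

def HasStrictCycle : Prop :=
  ∃ (k : ℕ) (c : ℕ → H), 0 < k ∧ (∀ i, c (i + k) = c i) ∧
    (∀ i, vertexOf (ι (c i)) = vertexOf (c (i + 1))) ∧
    (∀ i, 0 ≤ I (c i)) ∧ (∃ i, 0 < I (c i))

variable {vertexOf ι I}

theorem transGen_of_reflTransGen_nonnegTwistAdj {g h : H} (hg : 0 ≤ I g)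
    (hgh : ReflTransGen (nonnegTwistAdj vertexOf ι I) (vertexOf (ι g)) (vertexOf h)) :
    TransGen (fun g h => 0 ≤ I g ∧ vertexOf (ι g) = vertexOf h) g h := by
  generalize hu : vertexOf (ι g) = u at hgh
  induction hgh using ReflTransGen.head_induction_on generalizing g with
  | refl => exact .single ⟨hg, hu⟩
  | head huv _ ih =>
    obtain ⟨e, he, he', hIe⟩ := huv
    exact .head ⟨hg, hu.trans he.symm⟩ (ih hIe he')

theorem not_reflTransGen_nonnegTwistAdj (hnsc : ¬HasStrictCycle vertexOf ι I) {h : H}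
    (hpos : 0 < I h) :
    ¬ReflTransGen (nonnegTwistAdj vertexOf ι I) (vertexOf (ι h)) (vertexOf h) := by
  intro hback
  obtain ⟨k, hk, c, hc0, hper, hc⟩ :=
    (transGen_of_reflTransGen_nonnegTwistAdj hpos.le hback).exists_periodic_chain
  exact hnsc ⟨k, c, hk, hper, fun i => (hc i).2, fun i => (hc i).1, 0, hc0 ▸ hpos⟩

theorem exists_level_function_of_monotone [Fintype H] (hinv : ∀ h, ι (ι h) = h)
    (hI : ∀ h, I h + I (ι h) = 0) (d₀ : V → ℤ)
    (hzero : ∀ h, I h = 0 → d₀ (vertexOf h) = d₀ (vertexOf (ι h)))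
    (hpos : ∀ h, 0 < I h → d₀ (vertexOf h) < d₀ (vertexOf (ι h))) :
    ∃ (d : V → ℤ) (ℓ : H → ℤ), (∀ h, ℓ (ι h) = ℓ h) ∧ (∀ h, 0 < ℓ h) ∧
      (∀ h, d (vertexOf h) + I h * ℓ h = d (vertexOf (ι h))) := by
  set Δ : H → ℤ := fun h => d₀ (vertexOf (ι h)) - d₀ (vertexOf h)
  have hΔι : ∀ h, Δ (ι h) = -Δ h := fun h => by simp only [Δ, hinv]; ring
  have hIι : ∀ h, I (ι h) = -I h := fun h => eq_neg_of_add_eq_zero_right (hI h)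
  have hIΔ : ∀ h, I h ≠ 0 → 0 < I h * Δ h := by
    intro h hne
    rcases hne.lt_or_gt with hneg | hpos'
    · have := hpos (ι h) (by rw [hIι]; omega)
      rw [hinv] at this
      exact mul_pos_of_neg_of_neg hneg (by simp only [Δ]; omega)
    · exact mul_pos hpos' (sub_pos.mpr (hpos h hpos'))
  obtain ⟨N, hN, hdvd⟩ := exists_pos_forall_dvd I
  set ℓ : H → ℤ := fun h => if I h = 0 then 1 else N * Δ h / I h
  have hIℓ : ∀ h, I h ≠ 0 → I h * ℓ h = N * Δ h := fun h hne => by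
    simp only [ℓ, if_neg hne]
    exact Int.mul_ediv_cancel' ((hdvd h hne).mul_right _)
  refine ⟨fun v => N * d₀ v, ℓ, fun h => ?_, fun h => ?_, fun h => ?_⟩
  · by_cases h0 : I h = 0
    · simp [ℓ, hIι, h0]
    · have hι := hIℓ (ι h) (by rwa [hIι, neg_ne_zero])
      rw [hIι, hΔι, neg_mul, mul_neg, neg_inj, ← hIℓ h h0] at hι
      exact mul_left_cancel₀ h0 hι
  · by_cases h0 : I h = 0
    · simp [ℓ, h0]
    · have : 0 < I h * I h * ℓ h := by
        rw [mul_assoc, hIℓ h h0, mul_left_comm]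
        exact mul_pos hN (hIΔ h h0)
      exact pos_of_mul_pos_right this (mul_self_nonneg _)
  · by_cases h0 : I h = 0
    · simp [h0, hzero h h0]
    · rw [hIℓ h h0]
      simp only [Δ]
      ring

variable [Finite V]

theorem numAncestors_nonnegTwistAdj_eq (hinv : ∀ h, ι (ι h) = h)
    (hI : ∀ h, I h + I (ι h) = 0) {h : H} (h0 : I h = 0) :
    numAncestors (nonnegTwistAdj vertexOf ι I) (vertexOf h) =
      numAncestors (nonnegTwistAdj vertexOf ι I) (vertexOf (ι h)) := by
  have hfwd : nonnegTwistAdj vertexOf ι I (vertexOf h) (vertexOf (ι h)) := ⟨h, rfl, rfl, h0.ge⟩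
  have hbwd : nonnegTwistAdj vertexOf ι I (vertexOf (ι h)) (vertexOf h) :=
    ⟨ι h, rfl, by rw [hinv], by rw [eq_neg_of_add_eq_zero_right (hI h), h0, neg_zero]⟩
  exact le_antisymm (numAncestors_le_of_reflTransGen (.single hfwd))
    (numAncestors_le_of_reflTransGen (.single hbwd))

theorem numAncestors_nonnegTwistAdj_lt (hnsc : ¬HasStrictCycle vertexOf ι I) {h : H}
    (hpos : 0 < I h) :
    numAncestors (nonnegTwistAdj vertexOf ι I) (vertexOf h) <
      numAncestors (nonnegTwistAdj vertexOf ι I) (vertexOf (ι h)) :=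
  numAncestors_lt_of_reflTransGen (.single ⟨h, rfl, rfl, hpos.le⟩)
    (not_reflTransGen_nonnegTwistAdj hnsc hpos)

end Twist

theorem twist_no_strict_cycle_exists_level_function_general
    (V H : Type) [Fintype V] [Fintype H]
    (vertexOf : H → V) (ι : H → H)
    (hinv : ∀ h, ι (ι h) = h)
    (I : H → ℤ) (hI : ∀ h, I h + I (ι h) = 0)
    (hnsc : ¬ ∃ (k : ℕ) (c : ℕ → H), 0 < k ∧ (∀ i, c (i + k) = c i) ∧
        (∀ i, vertexOf (ι (c i)) = vertexOf (c (i + 1))) ∧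
        (∀ i, 0 ≤ I (c i)) ∧ (∃ i, 0 < I (c i))) :
    ∃ (d : V → ℤ) (ℓ : H → ℤ),
      (∀ h, ℓ (ι h) = ℓ h) ∧ (∀ h, 0 < ℓ h) ∧
      (∀ h, d (vertexOf h) + I h * ℓ h = d (vertexOf (ι h))) := by
  refine exists_level_function_of_monotone hinv hI
    (fun v => numAncestors (nonnegTwistAdj vertexOf ι I) v) (fun h h0 => ?_) (fun h hpos => ?_)
  · exact_mod_cast numAncestors_nonnegTwistAdj_eq hinv hI h0
  · exact_mod_cast numAncestors_nonnegTwistAdj_lt hnsc hpos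

/-- Existence of a level function and edge lengths for a twist without strict cycles
(condition (*) in the proof of Proposition 4.6 of the paper).

The finite connected multigraph is modelled by a finite vertex set `V`, a finite set `H`
of half-edges with a fixed-point free involution `ι` (whose orbits are the edges) and a
vertex assignment `vertexOf`.  A twist `I : H → ℤ` satisfies `I h + I (ι h) = 0` on every
edge.  A strict cycle is a closed directed path of edges with all twists `≥ 0` and at
least one `> 0`.  If there is no strict cycle, there are `d : V → ℤ` and positive edge
lengths `ℓ` (constant on edges) with `d (vertexOf h) + I h * ℓ h = d (vertexOf (ι h))`. -/
theorem twist_no_strict_cycle_exists_level_function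
    (V H : Type) [Fintype V] [Fintype H]
    (vertexOf : H → V) (ι : H → H)
    (hinv : ∀ h, ι (ι h) = h) (hnofix : ∀ h, ι h ≠ h)
    (I : H → ℤ) (hI : ∀ h, I h + I (ι h) = 0)
    (hconn : ∀ u v : V, Relation.ReflTransGen
      (fun a b => ∃ h, vertexOf h = a ∧ vertexOf (ι h) = b) u v)
    (hnsc : ¬ ∃ (k : ℕ) (c : ℕ → H), 0 < k ∧ (∀ i, c (i + k) = c i) ∧
        (∀ i, vertexOf (ι (c i)) = vertexOf (c (i + 1))) ∧
        (∀ i, 0 ≤ I (c i)) ∧ (∃ i, 0 < I (c i))) :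
    ∃ (d : V → ℤ) (ℓ : H → ℤ),
      (∀ h, ℓ (ι h) = ℓ h) ∧ (∀ h, 0 < ℓ h) ∧
      (∀ h, d (vertexOf h) + I h * ℓ h = d (vertexOf (ι h))) :=
  twist_no_strict_cycle_exists_level_function_general V H vertexOf ι hinv I hI hnsc
end

section
/- Let Γ be a finite connected multigraph with legs, r ≥ 1, leg values a_i ∈ ℤ/rℤ and vertex values δ : V → ℤ/rℤ, and let e = (h, h') be a separating edge. Let Γ̄ be the graph obtained by contracting e, with the merged vertex assigned value δ(u) + δ(v). Then restriction of weightings to the half-edges of Γ̄ defines a bijection from the set of weightings mod r of (Γ, a, δ) to the set of weightings mod r of (Γ̄, a, δ̄). -/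
/-! Since the endpoints `u = vertexOf h₀` and `v = vertexOf (ι h₀)` of `e` are distinct, a
weighting of `Γ` is determined by its values off `e`: the condition at `v` forces the value on
`ι h₀`, and antisymmetry the value on `h₀`. Conversely, extending a weighting of `Γ̄` in this way
satisfies the condition at `v` by construction, and the condition at `u` because the merged
condition is the sum of the conditions at `u` and `v`, in which the two half-edges of `e`
cancel. -/

/-- The involution induced on the half-edges of the graph obtained by deleting the edge
`{h₀, ι h₀}`. -/
def contractedInv {H : Type} (ι : H → H) (hinv : ∀ h, ι (ι h) = h) (h₀ : H)
    (h : {h : H // h ≠ h₀ ∧ h ≠ ι h₀}) : {h : H // h ≠ h₀ ∧ h ≠ ι h₀} :=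
  ⟨ι h.1, by
    constructor
    · intro e
      exact h.2.2 (by rw [← hinv h.1, e])
    · intro e
      have : h.1 = h₀ := by
        have h' := congrArg ι e
        rwa [hinv, hinv] at h'
      exact h.2.1 this⟩

open Finset

lemma sum_filter_eq_sum_filter_subtype_add {α M : Type*} [Fintype α] [DecidableEq α]
    [AddCommMonoid M] (p : α → Prop) [DecidablePred p] {a b : α} (hab : a ≠ b) (f : α → M) :
    ∑ x ∈ univ.filter p, f x
      = ∑ x ∈ univ.filter (fun x : {x // x ≠ a ∧ x ≠ b} => p x), f x
        + ((if p a then f a else 0) + if p b then f b else 0) := by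
  rw [sum_filter, sum_filter, ← sum_pair hab (f := fun x => if p x then f x else 0),
    ← sum_subtype (univ \ {a, b}) (by simp) (fun x => if p x then f x else 0),
    sum_sdiff (subset_univ _)]

lemma sum_filter_or_eq_add {α β M : Type*} [Fintype α] [DecidableEq β] [AddCommMonoid M]
    (g : α → β) (f : α → M) {u v : β} (huv : u ≠ v) :
    ∑ x ∈ univ.filter (fun x => g x = u ∨ g x = v), f x
      = ∑ x ∈ univ.filter (fun x => g x = u), f x + ∑ x ∈ univ.filter (fun x => g x = v), f x := by
  simp only [sum_filter, ← sum_add_distrib]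
  refine sum_congr rfl fun x _ => ?_
  split_ifs <;> simp_all

section Extension

variable {H : Type} {M : Type*} [DecidableEq H] [AddCommGroup M] (ι : H → H) (h₀ : H)

abbrev ContractedHalfEdge : Type := {h : H // h ≠ h₀ ∧ h ≠ ι h₀}

def extendWeighting (c : M) (w' : ContractedHalfEdge ι h₀ → M) (h : H) : M :=
  if hc : h ≠ h₀ ∧ h ≠ ι h₀ then w' ⟨h, hc⟩ else if h = h₀ then -c else c

variable {ι h₀}

lemma extendWeighting_val (c : M) (w' : ContractedHalfEdge ι h₀ → M)
    (h : ContractedHalfEdge ι h₀) : extendWeighting ι h₀ c w' h.1 = w' h :=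
  dif_pos h.2

lemma extendWeighting_self (c : M) (w' : ContractedHalfEdge ι h₀ → M) :
    extendWeighting ι h₀ c w' h₀ = -c := by
  simp [extendWeighting]

lemma extendWeighting_apply_self (hne : ι h₀ ≠ h₀) (c : M) (w' : ContractedHalfEdge ι h₀ → M) :
    extendWeighting ι h₀ c w' (ι h₀) = c := by
  simp [extendWeighting, hne]

lemma extendWeighting_apply_inv (hinv : ∀ h, ι (ι h) = h) (hne : ι h₀ ≠ h₀) {c : M}
    {w' : ContractedHalfEdge ι h₀ → M} (hw' : ∀ h, w' (contractedInv ι hinv h₀ h) = -w' h)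
    (h : H) : extendWeighting ι h₀ c w' (ι h) = -extendWeighting ι h₀ c w' h := by
  by_cases hc : h ≠ h₀ ∧ h ≠ ι h₀
  · calc extendWeighting ι h₀ c w' (ι h)
        _ = w' (contractedInv ι hinv h₀ ⟨h, hc⟩) :=
          extendWeighting_val c w' (contractedInv ι hinv h₀ ⟨h, hc⟩)
        _ = -w' ⟨h, hc⟩ := hw' _
        _ = -extendWeighting ι h₀ c w' h := congrArg _ (extendWeighting_val c w' ⟨h, hc⟩).symm
  · obtain rfl | rfl : h = h₀ ∨ h = ι h₀ := by tauto
    · rw [extendWeighting_apply_self hne, extendWeighting_self, neg_neg]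
    · rw [hinv, extendWeighting_self, extendWeighting_apply_self hne]

end Extension

section Weightings

variable {V L M : Type*} {H : Type} [Fintype H] [Fintype L] [DecidableEq V] [DecidableEq H]
  [AddCommGroup M] (vertexOf : H → V) (ι : H → H) (legvertex : L → V) (a : L → M) (δ : V → M)
  (h₀ : H)

def IsWeighting (w : H → M) : Prop :=
  (∀ h, w (ι h) = -w h) ∧
    ∀ x, (∑ h ∈ univ.filter (fun h => vertexOf h = x), w h)
      + (∑ i ∈ univ.filter (fun i => legvertex i = x), a i) = δ x

def IsContractedWeighting (hinv : ∀ h, ι (ι h) = h) (w' : ContractedHalfEdge ι h₀ → M) : Prop :=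
  (∀ h, w' (contractedInv ι hinv h₀ h) = -w' h) ∧
    (∀ x, x ≠ vertexOf h₀ → x ≠ vertexOf (ι h₀) →
      (∑ h ∈ univ.filter (fun h : ContractedHalfEdge ι h₀ => vertexOf h.1 = x), w' h)
        + (∑ i ∈ univ.filter (fun i => legvertex i = x), a i) = δ x) ∧
    (∑ h ∈ univ.filter (fun h : ContractedHalfEdge ι h₀ =>
          vertexOf h.1 = vertexOf h₀ ∨ vertexOf h.1 = vertexOf (ι h₀)), w' h)
        + (∑ i ∈ univ.filter
            (fun i => legvertex i = vertexOf h₀ ∨ legvertex i = vertexOf (ι h₀)), a i)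
      = δ (vertexOf h₀) + δ (vertexOf (ι h₀))

def edgeWeight (w' : ContractedHalfEdge ι h₀ → M) : M :=
  δ (vertexOf (ι h₀)) - ∑ i ∈ univ.filter (fun i => legvertex i = vertexOf (ι h₀)), a i
    - ∑ h ∈ univ.filter (fun h : ContractedHalfEdge ι h₀ => vertexOf h.1 = vertexOf (ι h₀)), w' h

variable {vertexOf ι legvertex a δ h₀}

lemma IsWeighting.isContractedWeighting_restrict (huv : vertexOf h₀ ≠ vertexOf (ι h₀))
    (hinv : ∀ h, ι (ι h) = h) {w : H → M} (hw : IsWeighting vertexOf ι legvertex a δ w) :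
    IsContractedWeighting vertexOf ι legvertex a δ h₀ hinv (fun h => w h.1) := by
  have hne : h₀ ≠ ι h₀ := fun h => huv (congrArg vertexOf h)
  refine ⟨fun h => hw.1 h.1, fun x hxu hxv => ?_, ?_⟩
  · have hx := hw.2 x
    rwa [sum_filter_eq_sum_filter_subtype_add _ hne, if_neg (Ne.symm hxu), if_neg (Ne.symm hxv),
      add_zero, add_zero] at hx
  · have hu := hw.2 (vertexOf h₀)
    have hv := hw.2 (vertexOf (ι h₀))
    rw [sum_filter_eq_sum_filter_subtype_add _ hne, if_pos rfl, if_neg huv.symm, add_zero] at hu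
    rw [sum_filter_eq_sum_filter_subtype_add _ hne, if_neg huv, if_pos rfl, zero_add,
      hw.1 h₀] at hv
    rw [sum_filter_or_eq_add _ _ huv, sum_filter_or_eq_add _ _ huv, ← hu, ← hv]
    abel

lemma IsWeighting.apply_inv_eq_edgeWeight (huv : vertexOf h₀ ≠ vertexOf (ι h₀)) {w : H → M}
    (hw : IsWeighting vertexOf ι legvertex a δ w) :
    w (ι h₀) = edgeWeight vertexOf ι legvertex a δ h₀ (fun h => w h.1) := by
  have hv := hw.2 (vertexOf (ι h₀))
  rw [sum_filter_eq_sum_filter_subtype_add _ (fun h => huv (congrArg vertexOf h)), if_neg huv,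
    if_pos rfl, zero_add] at hv
  rw [edgeWeight, ← hv]
  abel

lemma IsWeighting.extendWeighting_restrict (huv : vertexOf h₀ ≠ vertexOf (ι h₀)) {w : H → M}
    (hw : IsWeighting vertexOf ι legvertex a δ w) :
    extendWeighting ι h₀ (edgeWeight vertexOf ι legvertex a δ h₀ (fun h => w h.1))
      (fun h => w h.1) = w := by
  funext h
  by_cases hc : h ≠ h₀ ∧ h ≠ ι h₀
  · exact extendWeighting_val _ _ ⟨h, hc⟩
  · obtain rfl | rfl : h = h₀ ∨ h = ι h₀ := by tauto
    · rw [extendWeighting_self, ← hw.apply_inv_eq_edgeWeight huv, hw.1, neg_neg]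
    · rw [extendWeighting_apply_self (fun h => huv (congrArg vertexOf h).symm),
        hw.apply_inv_eq_edgeWeight huv]

lemma IsContractedWeighting.isWeighting_extendWeighting (huv : vertexOf h₀ ≠ vertexOf (ι h₀))
    {hinv : ∀ h, ι (ι h) = h} {w' : ContractedHalfEdge ι h₀ → M}
    (hw' : IsContractedWeighting vertexOf ι legvertex a δ h₀ hinv w') :
    IsWeighting vertexOf ι legvertex a δ
      (extendWeighting ι h₀ (edgeWeight vertexOf ι legvertex a δ h₀ w') w') := by
  have hne : h₀ ≠ ι h₀ := fun h => huv (congrArg vertexOf h)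
  refine ⟨extendWeighting_apply_inv hinv hne.symm hw'.1, fun x => ?_⟩
  rw [sum_filter_eq_sum_filter_subtype_add _ hne, extendWeighting_self,
    extendWeighting_apply_self hne.symm]
  simp only [extendWeighting_val]
  by_cases hxu : x = vertexOf h₀
  · subst hxu
    have hmerged := hw'.2.2
    rw [sum_filter_or_eq_add _ _ huv, sum_filter_or_eq_add _ _ huv] at hmerged
    rw [if_pos rfl, if_neg huv.symm, add_zero, edgeWeight, eq_sub_of_add_eq hmerged.symm]
    abel
  by_cases hxv : x = vertexOf (ι h₀)
  · subst hxv
    rw [if_neg huv, if_pos rfl, zero_add, edgeWeight]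
    abel
  rw [if_neg (Ne.symm hxu), if_neg (Ne.symm hxv), add_zero, add_zero]
  exact hw'.2.1 x hxu hxv

end Weightings

theorem weightings_restriction_bijOn_of_separating_edge_general
    (V H : Type) [Fintype H] [DecidableEq V] [DecidableEq H]
    (n r : ℕ)
    (vertexOf : H → V) (ι : H → H)
    (hinv : ∀ h, ι (ι h) = h)
    (legvertex : Fin n → V)
    (a : Fin n → ZMod r) (δ : V → ZMod r)
    (h₀ : H) (V₁ : Finset V)
    (hin : vertexOf (ι h₀) ∈ V₁) (hout : vertexOf h₀ ∉ V₁) :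
    Set.BijOn
      (fun (w : H → ZMod r) (h : {h : H // h ≠ h₀ ∧ h ≠ ι h₀}) => w h.1)
      {w : H → ZMod r |
        (∀ h, w (ι h) = - w h) ∧
        ∀ x : V, (∑ h ∈ Finset.univ.filter (fun h => vertexOf h = x), w h)
          + (∑ i ∈ Finset.univ.filter (fun i => legvertex i = x), a i) = δ x}
      {w' : {h : H // h ≠ h₀ ∧ h ≠ ι h₀} → ZMod r |
        (∀ h, w' (contractedInv ι hinv h₀ h) = - w' h) ∧
        (∀ x : V, x ≠ vertexOf h₀ → x ≠ vertexOf (ι h₀) →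
          (∑ h ∈ Finset.univ.filter
              (fun h : {h : H // h ≠ h₀ ∧ h ≠ ι h₀} => vertexOf h.1 = x), w' h)
            + (∑ i ∈ Finset.univ.filter (fun i => legvertex i = x), a i) = δ x) ∧
        ((∑ h ∈ Finset.univ.filter
              (fun h : {h : H // h ≠ h₀ ∧ h ≠ ι h₀} =>
                vertexOf h.1 = vertexOf h₀ ∨ vertexOf h.1 = vertexOf (ι h₀)), w' h)
          + (∑ i ∈ Finset.univ.filter
              (fun i => legvertex i = vertexOf h₀ ∨ legvertex i = vertexOf (ι h₀)), a i)
          = δ (vertexOf h₀) + δ (vertexOf (ι h₀)))} := by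
  have huv : vertexOf h₀ ≠ vertexOf (ι h₀) := fun h => hout (h ▸ hin)
  exact Set.InvOn.bijOn
    (f' := fun w' => extendWeighting ι h₀ (edgeWeight vertexOf ι legvertex a δ h₀ w') w')
    ⟨fun _ hw => IsWeighting.extendWeighting_restrict huv hw,
      fun w' _ => funext (extendWeighting_val _ w')⟩
    (fun _ hw => IsWeighting.isContractedWeighting_restrict huv hinv hw)
    (fun _ hw' => IsContractedWeighting.isWeighting_extendWeighting huv hw')

/-- Contracting a separating edge induces a bijection on weightings mod `r`
(proof of Proposition 3.4 of the paper).

Graph model: finite vertex set `V`, half-edges `H` with fixed-point free involution `ι`,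
vertex map `vertexOf`, legs via `legvertex` with values `a`, vertex values `δ`.  Let
`e = (h₀, ι h₀)` be a separating edge, with `V₁` the component of `vertexOf (ι h₀)` after
removing `e`.  The contracted graph `Γ̄` has half-edges `{h // h ≠ h₀ ∧ h ≠ ι h₀}`, the
same vertices except that the endpoints `u = vertexOf h₀` and `v = vertexOf (ι h₀)` of
`e` are merged into one vertex carrying the value `δ u + δ v`.  Restriction of weightings
to the remaining half-edges is a bijection from the weightings mod `r` of `Γ` onto the
weightings mod `r` of `Γ̄`. -/
theorem weightings_restriction_bijOn_of_separating_edge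
    (V H : Type) [Fintype V] [Fintype H] [DecidableEq V] [DecidableEq H]
    (n r : ℕ) (hr : 1 ≤ r)
    (vertexOf : H → V) (ι : H → H)
    (hinv : ∀ h, ι (ι h) = h) (hnofix : ∀ h, ι h ≠ h)
    (legvertex : Fin n → V)
    (hconn : ∀ u v : V, Relation.ReflTransGen
      (fun x y => ∃ h, vertexOf h = x ∧ vertexOf (ι h) = y) u v)
    (a : Fin n → ZMod r) (δ : V → ZMod r)
    (h₀ : H) (V₁ : Finset V)
    (hin : vertexOf (ι h₀) ∈ V₁) (hout : vertexOf h₀ ∉ V₁)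
    (hsep : ∀ h : H, h ≠ h₀ → h ≠ ι h₀ → (vertexOf h ∈ V₁ ↔ vertexOf (ι h) ∈ V₁)) :
    Set.BijOn
      (fun (w : H → ZMod r) (h : {h : H // h ≠ h₀ ∧ h ≠ ι h₀}) => w h.1)
      {w : H → ZMod r |
        (∀ h, w (ι h) = - w h) ∧
        ∀ x : V, (∑ h ∈ Finset.univ.filter (fun h => vertexOf h = x), w h)
          + (∑ i ∈ Finset.univ.filter (fun i => legvertex i = x), a i) = δ x}
      {w' : {h : H // h ≠ h₀ ∧ h ≠ ι h₀} → ZMod r |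
        (∀ h, w' (contractedInv ι hinv h₀ h) = - w' h) ∧
        (∀ x : V, x ≠ vertexOf h₀ → x ≠ vertexOf (ι h₀) →
          (∑ h ∈ Finset.univ.filter
              (fun h : {h : H // h ≠ h₀ ∧ h ≠ ι h₀} => vertexOf h.1 = x), w' h)
            + (∑ i ∈ Finset.univ.filter (fun i => legvertex i = x), a i) = δ x) ∧
        ((∑ h ∈ Finset.univ.filter
              (fun h : {h : H // h ≠ h₀ ∧ h ≠ ι h₀} =>
                vertexOf h.1 = vertexOf h₀ ∨ vertexOf h.1 = vertexOf (ι h₀)), w' h)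
          + (∑ i ∈ Finset.univ.filter
              (fun i => legvertex i = vertexOf h₀ ∨ legvertex i = vertexOf (ι h₀)), a i)
          = δ (vertexOf h₀) + δ (vertexOf (ι h₀)))} :=
  weightings_restriction_bijOn_of_separating_edge_general V H n r vertexOf ι hinv legvertex a δ h₀
    V₁ hin hout
end
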